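/- Let d ≥ 3 and define R_2 f_0(r) := sup_{t∈[1,2], t ≥ 3r/2} (1/r)|∫_{t−r}^{t+r} f_0(s) ds|. Then for 1 < p < ∞ and p ≤ q ≤ pd, ‖R_2 f_0‖_{L^q(r^{d−1}dr)} ≲ ‖f_0‖_{L^p(s^{d−1}ds)}; moreover the inequality holds for p = 1 when q < d. -/

import Mathlib

/-!
Only the values of `f0` on `(1/4, 4]` enter `R2op f0`, where the weight `s^{d-1}` is comparable
to `1`, and `R2op f0 r = 0` for `r > 4/3`. Hölder on a window of length `2r` gives
`R2op f0 r ≲ r^{-1/p} ‖f0‖_{L^p(1/4, 4)}`, which lies in `L^q(r^{d-1} dr)` near `0` exactly when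
`q < p d`.

At the endpoint `q = p d` we run the real-interpolation argument directly. Cut `f0` at height
`t / 4`: the bounded part adds at most `t / 2` to `R2op f0`, so `R2op f0 r > t` forces
`r ≲ J(t/4) / t`, where `J(θ)` is the mass of `|f0|` above `θ`. Insert this weak-type bound into the
layer cake formula for `‖R2op f0‖_{pd}^{pd}` and apply Chebyshev, `θ^{p-1} J(θ) ≤ ‖f0‖_p^p`, to
`d - 1` of the `d` factors of `J`. What remains is `∫ t^{p-2} J(t/4) dt`, and by Fubini this is
`≈ ‖f0‖_p^p`.
-/

open MeasureTheory Filter Set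
open scoped ENNReal NNReal

noncomputable section

/-- The measure `r^{d-1} dr` on `(0,∞)`. -/
def muWeight (d : ℕ) : Measure ℝ :=
  ((volume : Measure ℝ).restrict (Set.Ioi 0)).withDensity
    (fun s => ENNReal.ofReal (s ^ (d - 1)))

/-- `R_2 f_0(r) = sup_{t ∈ [1,2], t ≥ 3r/2} (1/r) |∫_{t-r}^{t+r} f_0(s) ds|`. -/
def R2op (f0 : ℝ → ℝ) (r : ℝ) : ℝ :=
  ⨆ t : {t : ℝ // t ∈ Set.Icc (1:ℝ) 2 ∧ 3*r/2 ≤ t},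
    (1/r) * |∫ s in ((t:ℝ) - r)..((t:ℝ) + r), f0 s|

theorem lintegral_Ioo_ofReal_rpow {a s : ℝ} (ha : 0 ≤ a) (hs : -1 < s) :
    ∫⁻ t in Ioo 0 a, ENNReal.ofReal (t ^ s) = ENNReal.ofReal (a ^ (s + 1) / (s + 1)) := by
  have h_int : IntegrableOn (fun t : ℝ => t ^ s) (Ioo 0 a) := by
    rcases ha.eq_or_lt with rfl | ha
    · simp
    · exact (intervalIntegral.integrableOn_Ioo_rpow_iff ha).2 hs
  rw [← ofReal_integral_eq_lintegral_ofReal h_int, ← integral_Ioc_eq_integral_Ioo,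
    ← intervalIntegral.integral_of_le ha, integral_rpow (Or.inl hs),
    Real.zero_rpow (by linarith), sub_zero]
  filter_upwards [ae_restrict_mem measurableSet_Ioo] with t ht
  exact Real.rpow_nonneg ht.1.le s

theorem ENNReal.rpow_sub_one_mul_self (x : ℝ≥0∞) {p : ℝ} (hp : 1 ≤ p) :
    x ^ (p - 1) * x = x ^ p := by
  calc x ^ (p - 1) * x = x ^ (p - 1) * x ^ (1 : ℝ) := by rw [ENNReal.rpow_one]
    _ = x ^ p := by rw [← ENNReal.rpow_add_of_nonneg _ _ (by linarith) zero_le_one, sub_add_cancel]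

section Integrals

variable {α E : Type*} [MeasurableSpace α] [NormedAddCommGroup E] {μ : Measure α}

theorem lintegral_enorm_le_eLpNorm_mul_measure_univ_rpow {f : α → E}
    (hf : AEStronglyMeasurable f μ) {p : ℝ} (hp : 1 ≤ p) :
    ∫⁻ x, ‖f x‖ₑ ∂μ ≤ eLpNorm f (ENNReal.ofReal p) μ * μ univ ^ (1 - p⁻¹) := by
  rw [← eLpNorm_one_eq_lintegral_enorm]
  convert eLpNorm_le_eLpNorm_mul_rpow_measure_univ (p := 1) (q := ENNReal.ofReal p)
    (by simpa using hp) hf using 3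
  rw [ENNReal.toReal_one, ENNReal.toReal_ofReal (by linarith), one_div_one, one_div]

/-- Unlike `lintegral_rpow_eq_lintegral_meas_lt_mul`, this needs no measurability of `F`: it is
applied to `R2op f0`, a supremum over uncountably many windows. -/
theorem lintegral_enorm_rpow_le_lintegral_meas_lt_mul (F : α → E) {Q : ℝ} (hQ : 0 < Q) :
    ∫⁻ x, ‖F x‖ₑ ^ Q ∂μ ≤
      ENNReal.ofReal Q * ∫⁻ t in Ioi 0, μ {x | t < ‖F x‖} * ENNReal.ofReal (t ^ (Q - 1)) := by
  obtain ⟨h, h_meas, h_le, h_eq⟩ := exists_measurable_le_lintegral_eq μ fun x => ‖F x‖ₑ ^ Q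
  have h_ne_top (x : α) : h x ≠ ⊤ :=
    ne_top_of_le_ne_top (ENNReal.rpow_ne_top_of_nonneg hQ.le enorm_ne_top) (h_le x)
  set H : α → ℝ := fun x => (h x).toReal ^ Q⁻¹
  have hH_nonneg (x : α) : 0 ≤ H x := by positivity
  have hH_pow (x : α) : ENNReal.ofReal (H x ^ Q) = h x := by
    rw [← Real.rpow_mul ENNReal.toReal_nonneg, inv_mul_cancel₀ hQ.ne', Real.rpow_one,
      ENNReal.ofReal_toReal (h_ne_top x)]
  have hH_le (x : α) : H x ≤ ‖F x‖ := by
    have : (h x).toReal ≤ ‖F x‖ ^ Q := by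
      rw [← toReal_enorm, ENNReal.toReal_rpow]
      exact ENNReal.toReal_mono (ENNReal.rpow_ne_top_of_nonneg hQ.le enorm_ne_top) (h_le x)
    calc H x ≤ (‖F x‖ ^ Q) ^ Q⁻¹ := by simp only [H]; gcongr
      _ = ‖F x‖ := by rw [← Real.rpow_mul (norm_nonneg _), mul_inv_cancel₀ hQ.ne', Real.rpow_one]
  calc ∫⁻ x, ‖F x‖ₑ ^ Q ∂μ = ∫⁻ x, ENNReal.ofReal (H x ^ Q) ∂μ := by simp_rw [h_eq, hH_pow]
    _ = ENNReal.ofReal Q * ∫⁻ t in Ioi 0, μ {x | t < H x} * ENNReal.ofReal (t ^ (Q - 1)) :=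
      lintegral_rpow_eq_lintegral_meas_lt_mul μ (ae_of_all _ hH_nonneg)
        (by fun_prop) hQ
    _ ≤ _ := by
      gcongr with t x
      exact hH_le x

def tailIntegral (μ : Measure α) (f : α → E) (θ : ℝ) : ℝ≥0∞ :=
  ∫⁻ x, {x | θ < ‖f x‖}.indicator (fun x => ‖f x‖ₑ) x ∂μ

theorem lintegral_enorm_le_add_tailIntegral (f : α → E) (θ : ℝ) :
    ∫⁻ x, ‖f x‖ₑ ∂μ ≤ ENNReal.ofReal θ * μ univ + tailIntegral μ f θ := by
  calc ∫⁻ x, ‖f x‖ₑ ∂μ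
      ≤ ∫⁻ x, ENNReal.ofReal θ + {x | θ < ‖f x‖}.indicator (fun x => ‖f x‖ₑ) x ∂μ := by
        refine lintegral_mono fun x => ?_
        simp only [indicator_apply, mem_ofPred_eq]
        split_ifs with hx
        · exact le_add_self
        · rw [add_zero, ← ofReal_norm]
          exact ENNReal.ofReal_le_ofReal (not_lt.1 hx)
    _ = ENNReal.ofReal θ * μ univ + tailIntegral μ f θ := by
        rw [lintegral_add_left measurable_const, lintegral_const, tailIntegral]

theorem rpow_mul_tailIntegral_le (f : α → E) (θ : ℝ) {p : ℝ} (hp : 1 ≤ p) :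
    ENNReal.ofReal θ ^ (p - 1) * tailIntegral μ f θ ≤ ∫⁻ x, ‖f x‖ₑ ^ p ∂μ := by
  refine (lintegral_const_mul_le _ _).trans (lintegral_mono fun x => ?_)
  simp only [indicator_apply, mem_ofPred_eq]
  split_ifs with hx
  · calc ENNReal.ofReal θ ^ (p - 1) * ‖f x‖ₑ ≤ ‖f x‖ₑ ^ (p - 1) * ‖f x‖ₑ := by
          rw [← ofReal_norm]
          gcongr
      _ = ‖f x‖ₑ ^ p := ENNReal.rpow_sub_one_mul_self _ hp
  · simp

/-- The point `x` lies in the tail at level `t / c` exactly for `t < c ‖f x‖`. -/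
theorem lintegral_rpow_mul_tailIntegral [MeasurableSpace E] [OpensMeasurableSpace E] [SFinite μ]
    {f : α → E} (hf : Measurable f) {p c : ℝ} (hp : 1 < p) (hc : 0 < c) :
    ∫⁻ t in Ioi 0, ENNReal.ofReal (t ^ (p - 2)) * tailIntegral μ f (t / c) =
      ENNReal.ofReal (c ^ (p - 1) / (p - 1)) * ∫⁻ x, ‖f x‖ₑ ^ p ∂μ := by
  have h_inner (x : α) :
      ∫⁻ t in Ioi 0, ENNReal.ofReal (t ^ (p - 2)) *
          {x | t / c < ‖f x‖}.indicator (fun x => ‖f x‖ₑ) x =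
        ENNReal.ofReal (c ^ (p - 1) / (p - 1)) * ‖f x‖ₑ ^ p := by
    have h_ind (t : ℝ) : ENNReal.ofReal (t ^ (p - 2)) *
        {x | t / c < ‖f x‖}.indicator (fun x => ‖f x‖ₑ) x =
          (Iio (c * ‖f x‖)).indicator (fun t => ENNReal.ofReal (t ^ (p - 2)) * ‖f x‖ₑ) t := by
      simp only [indicator_apply, mem_ofPred_eq, mem_Iio, div_lt_iff₀' hc]
      split_ifs <;> simp
    simp_rw [h_ind]
    rw [lintegral_indicator measurableSet_Iio, Measure.restrict_restrict measurableSet_Iio,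
      Iio_inter_Ioi, lintegral_mul_const' _ _ enorm_ne_top,
      lintegral_Ioo_ofReal_rpow (by positivity) (by linarith), show p - 2 + 1 = p - 1 by ring,
      Real.mul_rpow hc.le (norm_nonneg _), mul_div_right_comm, ENNReal.ofReal_mul (by
        have := sub_pos.2 hp; positivity), ← ENNReal.ofReal_rpow_of_nonneg (norm_nonneg _)
        (by linarith), ofReal_norm, mul_assoc, ENNReal.rpow_sub_one_mul_self _ hp.le]
  have h_meas : Measurable (Function.uncurry fun t x =>
      ENNReal.ofReal (t ^ (p - 2)) * {x | t / c < ‖f x‖}.indicator (fun x => ‖f x‖ₑ) x) := by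
    simp only [indicator_apply, mem_ofPred_eq]
    refine Measurable.mul (by fun_prop) (Measurable.ite ?_ (by fun_prop) measurable_const)
    exact measurableSet_lt (by fun_prop) (by fun_prop)
  calc ∫⁻ t in Ioi 0, ENNReal.ofReal (t ^ (p - 2)) * tailIntegral μ f (t / c)
      = ∫⁻ t in Ioi 0, ∫⁻ x, ENNReal.ofReal (t ^ (p - 2)) *
          {x | t / c < ‖f x‖}.indicator (fun x => ‖f x‖ₑ) x ∂μ := by
        simp_rw [tailIntegral, lintegral_const_mul' _ _ ENNReal.ofReal_ne_top]
    _ = ∫⁻ x, ENNReal.ofReal (c ^ (p - 1) / (p - 1)) * ‖f x‖ₑ ^ p ∂μ := by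
        rw [lintegral_lintegral_swap h_meas.aemeasurable]
        simp_rw [h_inner]
    _ = _ := lintegral_const_mul' _ _ ENNReal.ofReal_ne_top

end Integrals

section Weight

theorem lintegral_muWeight (d : ℕ) (h : ℝ → ℝ≥0∞) :
    ∫⁻ r, h r ∂muWeight d = ∫⁻ r in Ioi 0, ENNReal.ofReal (r ^ (d - 1)) * h r :=
  lintegral_withDensity_eq_lintegral_mul_non_measurable _ (by fun_prop) (ae_of_all _ fun _ =>
    ENNReal.ofReal_lt_top) h

theorem muWeight_apply (d : ℕ) {s : Set ℝ} (hs : MeasurableSet s) :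
    muWeight d s = ∫⁻ r in s ∩ Ioi 0, ENNReal.ofReal (r ^ (d - 1)) := by
  rw [muWeight, withDensity_apply _ hs, Measure.restrict_restrict hs]

theorem volume_restrict_Ioi_le_smul_muWeight (d : ℕ) {a : ℝ} (ha : 0 < a) :
    volume.restrict (Ioi a) ≤ ENNReal.ofReal ((a ^ (d - 1))⁻¹) • muWeight d := by
  refine Measure.le_iff.2 fun s hs => ?_
  rw [Measure.restrict_apply hs, Measure.smul_apply, smul_eq_mul, muWeight_apply d hs]
  calc volume (s ∩ Ioi a) = ∫⁻ _ in s ∩ Ioi a, 1 := (setLIntegral_one _).symm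
    _ ≤ ∫⁻ r in s ∩ Ioi a, ENNReal.ofReal ((a ^ (d - 1))⁻¹) * ENNReal.ofReal (r ^ (d - 1)) := by
        refine setLIntegral_mono' (hs.inter measurableSet_Ioi) fun r hr => ?_
        rw [← ENNReal.ofReal_mul (by positivity), ← ENNReal.ofReal_one]
        refine ENNReal.ofReal_le_ofReal ((one_le_inv_mul₀ (by positivity)).2 ?_)
        exact pow_le_pow_left₀ ha.le (le_of_lt hr.2) _
    _ = ENNReal.ofReal ((a ^ (d - 1))⁻¹) * ∫⁻ r in s ∩ Ioi a, ENNReal.ofReal (r ^ (d - 1)) :=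
        lintegral_const_mul' _ _ ENNReal.ofReal_ne_top
    _ ≤ _ := by gcongr

theorem eLpNorm_restrict_le_eLpNorm_muWeight {E : Type*} [NormedAddCommGroup E] (d : ℕ) {a : ℝ}
    (ha : 0 < a) {s : Set ℝ} (hs : s ⊆ Ioi a) (f : ℝ → E) {p : ℝ≥0∞} (hp : p ≠ ⊤) :
    eLpNorm f p (volume.restrict s) ≤
      ENNReal.ofReal ((a ^ (d - 1))⁻¹) ^ (1 / p).toReal * eLpNorm f p (muWeight d) :=
  (eLpNorm_mono_measure f ((Measure.restrict_mono hs le_rfl).trans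
    (volume_restrict_Ioi_le_smul_muWeight d ha))).trans_eq (eLpNorm_smul_measure_of_ne_top hp f _)

theorem muWeight_setOf_ofReal_lt_le {d : ℕ} (hd : d ≠ 0) (B : ℝ≥0∞) :
    muWeight d {r | ENNReal.ofReal r < B} ≤ B ^ d := by
  rcases eq_or_ne B ⊤ with rfl | hB
  · simp [ENNReal.top_pow hd]
  have h_sub : {r | ENNReal.ofReal r < B} ∩ Ioi 0 ⊆ Ioo 0 B.toReal := fun r hr =>
    ⟨hr.2, (ENNReal.ofReal_lt_iff_lt_toReal hr.2.le hB).1 hr.1⟩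
  rw [muWeight_apply d (measurableSet_lt (by fun_prop) measurable_const)]
  calc ∫⁻ r in {r | ENNReal.ofReal r < B} ∩ Ioi 0, ENNReal.ofReal (r ^ (d - 1))
      ≤ ∫⁻ _ in Ioo 0 B.toReal, ENNReal.ofReal (B.toReal ^ (d - 1)) :=
        (lintegral_mono_set h_sub).trans (setLIntegral_mono' measurableSet_Ioo fun r hr =>
          ENNReal.ofReal_le_ofReal (pow_le_pow_left₀ hr.1.le hr.2.le _))
    _ = B ^ d := by
        rw [setLIntegral_const, Real.volume_Ioo, sub_zero, ← ENNReal.ofReal_mul (by positivity),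
          ← pow_succ, Nat.sub_add_cancel (Nat.one_le_iff_ne_zero.2 hd), ENNReal.ofReal_pow
          ENNReal.toReal_nonneg, ENNReal.ofReal_toReal hB]

theorem lintegral_indicator_rpow_muWeight {d : ℕ} (hd : d ≠ 0) {b s : ℝ} (hb : 0 ≤ b)
    (hs : -d < s) :
    ∫⁻ r, (Ioo 0 b).indicator (fun r => ENNReal.ofReal (r ^ s)) r ∂muWeight d =
      ENNReal.ofReal (b ^ (s + d) / (s + d)) := by
  have h_cast : ((d - 1 : ℕ) : ℝ) = d - 1 := by
    rw [Nat.cast_sub (Nat.one_le_iff_ne_zero.2 hd), Nat.cast_one]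
  have h_mul : ∀ r ∈ Ioi (0 : ℝ), ENNReal.ofReal (r ^ (d - 1)) *
      (Ioo 0 b).indicator (fun r => ENNReal.ofReal (r ^ s)) r =
        (Ioo 0 b).indicator (fun r => ENNReal.ofReal (r ^ (s + (d - 1)))) r := by
    intro r hr
    simp only [indicator_apply]
    split_ifs
    · rw [← ENNReal.ofReal_mul (pow_pos hr _).le, ← Real.rpow_natCast, h_cast,
        ← Real.rpow_add hr, add_comm]
    · rw [mul_zero]
  rw [lintegral_muWeight, setLIntegral_congr_fun measurableSet_Ioi h_mul,
    lintegral_indicator measurableSet_Ioo, Measure.restrict_restrict measurableSet_Ioo,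
    inter_eq_self_of_subset_left Ioo_subset_Ioi_self,
    lintegral_Ioo_ofReal_rpow hb (by linarith), show s + (d - 1) + 1 = s + d by ring]

theorem ae_muWeight_pos (d : ℕ) : ∀ᵐ r ∂muWeight d, 0 < r :=
  (withDensity_absolutelyContinuous _ _).ae_le (ae_restrict_mem measurableSet_Ioi)

theorem eLpNorm_indicator_rpow_muWeight_ne_top {d : ℕ} (hd : d ≠ 0) {a q b : ℝ} (hq : 0 < q)
    (hb : 0 ≤ b) (haq : a * q < d) :
    eLpNorm ((Ioo 0 b).indicator fun r => r ^ (-a)) (ENNReal.ofReal q) (muWeight d) ≠ ⊤ := by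
  have h_pow : (fun r => ‖(Ioo 0 b).indicator (fun r => r ^ (-a)) r‖ₑ ^ q) =
      (Ioo 0 b).indicator fun r => ENNReal.ofReal (r ^ (-a * q)) := by
    ext r
    simp only [indicator_apply]
    split_ifs with hr
    · rw [Real.enorm_of_nonneg (Real.rpow_nonneg hr.1.le _), ENNReal.ofReal_rpow_of_nonneg
        (Real.rpow_nonneg hr.1.le _) hq.le, ← Real.rpow_mul hr.1.le]
    · simp [hq]
  rw [eLpNorm_eq_lintegral_rpow_enorm_toReal (by simpa using hq) ENNReal.ofReal_ne_top,
    ENNReal.toReal_ofReal hq.le, h_pow, lintegral_indicator_rpow_muWeight hd hb (by linarith)]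
  exact ENNReal.rpow_ne_top_of_nonneg (by positivity) ENNReal.ofReal_ne_top

end Weight

section R2op

theorem R2op_nonneg (f0 : ℝ → ℝ) {r : ℝ} (hr : 0 < r) : 0 ≤ R2op f0 r :=
  Real.iSup_nonneg fun _ => by positivity

theorem R2op_eq_zero_of_lt (f0 : ℝ → ℝ) {r : ℝ} (hr : 4 / 3 < r) : R2op f0 r = 0 := by
  have : IsEmpty {t : ℝ // t ∈ Icc (1 : ℝ) 2 ∧ 3 * r / 2 ≤ t} :=
    ⟨fun ⟨t, ⟨ht, htr⟩⟩ => by linarith [ht.2]⟩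
  exact Real.iSup_of_isEmpty _

/-- Since `1 ≤ t ≤ 2` and `r ≤ 2t/3`, every window `(t - r, t + r]` lies in `(1/4, 4]`. -/
theorem ofReal_R2op_le (f0 : ℝ → ℝ) {r : ℝ} (hr : 0 < r) {B : ℝ≥0∞}
    (hB : ∀ t, Ioc (t - r) (t + r) ⊆ Ioc (1 / 4) 4 → ∫⁻ s in Ioc (t - r) (t + r), ‖f0 s‖ₑ ≤ B) :
    ENNReal.ofReal (R2op f0 r) ≤ B / ENNReal.ofReal r := by
  have hr' : ENNReal.ofReal r ≠ 0 := by simpa using hr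
  rcases eq_or_ne B ⊤ with rfl | hB_top
  · simp [ENNReal.top_div_of_ne_top ENNReal.ofReal_ne_top]
  rw [ENNReal.ofReal_le_iff_le_toReal (ENNReal.div_ne_top hB_top hr')]
  refine Real.iSup_le (fun ⟨t, ⟨ht, htr⟩⟩ => ?_) ENNReal.toReal_nonneg
  rw [← ENNReal.ofReal_le_iff_le_toReal (ENNReal.div_ne_top hB_top hr'), one_div_mul_eq_div,
    ENNReal.ofReal_div_of_pos hr, intervalIntegral.integral_of_le (by linarith),
    ← Real.enorm_eq_ofReal_abs]
  gcongr
  exact (enorm_integral_le_lintegral_enorm _).trans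
    (hB t (Ioc_subset_Ioc (by linarith [ht.1]) (by linarith [ht.2])))

theorem ofReal_R2op_le_rpow {f0 : ℝ → ℝ} (hf : Measurable f0) {p : ℝ} (hp : 1 ≤ p) {r : ℝ}
    (hr : 0 < r) :
    ENNReal.ofReal (R2op f0 r) ≤ 2 * ENNReal.ofReal (r ^ (-p⁻¹)) *
      eLpNorm f0 (ENNReal.ofReal p) (volume.restrict (Ioc (1 / 4) 4)) := by
  set A := eLpNorm f0 (ENNReal.ofReal p) (volume.restrict (Ioc (1 / 4) 4))
  have h_inv : 0 ≤ 1 - p⁻¹ := sub_nonneg.2 (inv_le_one_of_one_le₀ hp)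
  have h_real : (2 * r) ^ (1 - p⁻¹) / r ≤ 2 * r ^ (-p⁻¹) := by
    rw [Real.mul_rpow zero_le_two hr.le, mul_div_assoc, ← Real.rpow_sub_one hr.ne',
      show 1 - p⁻¹ - 1 = -p⁻¹ by ring]
    gcongr
    exact Real.rpow_le_self_of_one_le one_le_two (by linarith [inv_nonneg.2 (zero_le_one.trans hp)])
  refine (ofReal_R2op_le f0 hr (B := A * ENNReal.ofReal (2 * r) ^ (1 - p⁻¹)) fun t ht => ?_).trans
    ?_
  · refine (lintegral_enorm_le_eLpNorm_mul_measure_univ_rpow hf.aestronglyMeasurable hp).trans ?_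
    rw [Measure.restrict_apply_univ, Real.volume_Ioc, show t + r - (t - r) = 2 * r by ring]
    gcongr
    exact eLpNorm_mono_measure _ (Measure.restrict_mono ht le_rfl)
  · calc A * ENNReal.ofReal (2 * r) ^ (1 - p⁻¹) / ENNReal.ofReal r
        = ENNReal.ofReal ((2 * r) ^ (1 - p⁻¹) / r) * A := by
          rw [ENNReal.ofReal_rpow_of_nonneg (by positivity) h_inv, mul_div_assoc,
            ← ENNReal.ofReal_div_of_pos hr, mul_comm]
      _ ≤ ENNReal.ofReal (2 * r ^ (-p⁻¹)) * A := by gcongr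
      _ = 2 * ENNReal.ofReal (r ^ (-p⁻¹)) * A := by
          rw [ENNReal.ofReal_mul zero_le_two, ENNReal.ofReal_ofNat]

theorem ofReal_R2op_le_add_tailIntegral (f0 : ℝ → ℝ) {r : ℝ} (hr : 0 < r) {θ : ℝ} (hθ : 0 ≤ θ) :
    ENNReal.ofReal (R2op f0 r) ≤ ENNReal.ofReal (2 * θ) +
      tailIntegral (volume.restrict (Ioc (1 / 4) 4)) f0 θ / ENNReal.ofReal r := by
  refine (ofReal_R2op_le f0 hr (B := ENNReal.ofReal θ * ENNReal.ofReal (2 * r) +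
    tailIntegral (volume.restrict (Ioc (1 / 4) 4)) f0 θ) fun t ht => ?_).trans_eq ?_
  · refine (lintegral_enorm_le_add_tailIntegral f0 θ).trans ?_
    rw [Measure.restrict_apply_univ, Real.volume_Ioc, show t + r - (t - r) = 2 * r by ring]
    gcongr
    exact lintegral_mono' (Measure.restrict_mono ht le_rfl) le_rfl
  · rw [ENNReal.add_div, mul_div_assoc, ← ENNReal.ofReal_div_of_pos hr,
      mul_div_cancel_right₀ _ hr.ne',
      ← ENNReal.ofReal_mul hθ, mul_comm]

/-- Truncate at height `t / 4`: the bounded part contributes at most `t / 2` to `R2op f0 r`. -/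
theorem muWeight_lt_norm_R2op_le {d : ℕ} (hd : d ≠ 0) (f0 : ℝ → ℝ) {t : ℝ} (ht : 0 < t) :
    muWeight d {r | t < ‖R2op f0 r‖} ≤
      (tailIntegral (volume.restrict (Ioc (1 / 4) 4)) f0 (t / 4) / ENNReal.ofReal (t / 2)) ^ d := by
  set J := tailIntegral (volume.restrict (Ioc (1 / 4) 4)) f0 (t / 4)
  refine (measure_mono_ae ?_).trans (muWeight_setOf_ofReal_lt_le hd _)
  filter_upwards [ae_muWeight_pos d] with r hr hlt
  change t < ‖R2op f0 r‖ at hlt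
  rw [Real.norm_of_nonneg (R2op_nonneg f0 hr)] at hlt
  have h_add : ENNReal.ofReal (t / 2) + ENNReal.ofReal (t / 2) < ENNReal.ofReal (t / 2) +
      J / ENNReal.ofReal r := by
    calc ENNReal.ofReal (t / 2) + ENNReal.ofReal (t / 2) = ENNReal.ofReal t := by
          rw [← ENNReal.ofReal_add (by positivity) (by positivity), add_halves]
      _ < ENNReal.ofReal (R2op f0 r) := (ENNReal.ofReal_lt_ofReal_iff (ht.trans hlt)).2 hlt
      _ ≤ ENNReal.ofReal (2 * (t / 4)) + J / ENNReal.ofReal r :=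
          ofReal_R2op_le_add_tailIntegral f0 hr (by positivity)
      _ = ENNReal.ofReal (t / 2) + J / ENNReal.ofReal r := by ring_nf
  have h_lt := (ENNReal.add_lt_add_iff_left ENNReal.ofReal_ne_top).1 h_add
  rw [ENNReal.lt_div_iff_mul_lt (by simp [hr]) (by simp)] at h_lt
  change ENNReal.ofReal r < J / ENNReal.ofReal (t / 2)
  rw [ENNReal.lt_div_iff_mul_lt (by simp [ht]) (by simp), mul_comm]
  exact h_lt

end R2op

/-- Chebyshev on `d - 1` of the `d` factors of `J`; the powers of `t` combine to `t^{p-2}`. -/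
theorem div_pow_mul_rpow_le {d : ℕ} (hd : d ≠ 0) {p t : ℝ} (ht : 0 < t) {J N : ℝ≥0∞}
    (hJN : ENNReal.ofReal (t / 4) ^ (p - 1) * J ≤ N) :
    (J / ENNReal.ofReal (t / 2)) ^ d * ENNReal.ofReal (t ^ (p * d - 1)) ≤
      ENNReal.ofReal (2 ^ d * 4 ^ ((p - 1) * (d - 1))) * N ^ (d - 1) *
        (ENNReal.ofReal (t ^ (p - 2)) * J) := by
  have h_cast : ((d - 1 : ℕ) : ℝ) = d - 1 := by
    rw [Nat.cast_sub (Nat.one_le_iff_ne_zero.2 hd), Nat.cast_one]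
  set m := (p - 1) * ((d : ℝ) - 1)
  have h_cheb : ENNReal.ofReal ((t / 4) ^ m) * J ^ (d - 1) ≤ N ^ (d - 1) := by
    calc ENNReal.ofReal ((t / 4) ^ m) * J ^ (d - 1)
        = (ENNReal.ofReal (t / 4) ^ (p - 1) * J) ^ (d - 1) := by
          rw [mul_pow, ← ENNReal.rpow_natCast (ENNReal.ofReal (t / 4) ^ (p - 1)),
            ← ENNReal.rpow_mul, h_cast,
            ENNReal.ofReal_rpow_of_pos (by positivity)]
      _ ≤ N ^ (d - 1) := by gcongr
  have h_pow : J ^ (d - 1) ≤ ENNReal.ofReal ((t / 4) ^ (-m)) * N ^ (d - 1) := by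
    calc J ^ (d - 1) = ENNReal.ofReal ((t / 4) ^ (-m)) *
          (ENNReal.ofReal ((t / 4) ^ m) * J ^ (d - 1)) := by
          rw [← mul_assoc, ← ENNReal.ofReal_mul (by positivity), ← Real.rpow_add (by positivity),
            neg_add_cancel, Real.rpow_zero, ENNReal.ofReal_one, one_mul]
      _ ≤ _ := by gcongr
  have h_real : (t / 4) ^ (-m) * ((t / 2) ^ d)⁻¹ * t ^ (p * d - 1) =
      2 ^ d * 4 ^ m * t ^ (p - 2) := by
    have h_four : (t / 4) ^ (-m) = 4 ^ m * t ^ (-m) := by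
      rw [Real.div_rpow ht.le (by norm_num), Real.rpow_neg (by norm_num : (0 : ℝ) ≤ 4),
        div_inv_eq_mul, mul_comm]
    have h_two : ((t / 2) ^ d)⁻¹ = 2 ^ d * t ^ (-(d : ℝ)) := by
      rw [div_pow, inv_div, Real.rpow_neg ht.le, Real.rpow_natCast, div_eq_mul_inv]
    rw [h_four, h_two, show 4 ^ m * t ^ (-m) * (2 ^ d * t ^ (-(d : ℝ))) * t ^ (p * d - 1) =
      2 ^ d * 4 ^ m * (t ^ (-m) * t ^ (-(d : ℝ)) * t ^ (p * d - 1)) by ring,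
      ← Real.rpow_add ht, ← Real.rpow_add ht]
    congr 2
    ring
  calc (J / ENNReal.ofReal (t / 2)) ^ d * ENNReal.ofReal (t ^ (p * d - 1))
      = J ^ (d - 1) * J * ENNReal.ofReal (((t / 2) ^ d)⁻¹) * ENNReal.ofReal (t ^ (p * d - 1)) := by
        rw [div_eq_mul_inv, mul_pow, ← ENNReal.inv_pow, ← pow_sub_one_mul hd,
          ENNReal.ofReal_inv_of_pos (by positivity), ENNReal.ofReal_pow (by positivity)]
    _ ≤ ENNReal.ofReal ((t / 4) ^ (-m)) * N ^ (d - 1) * J * ENNReal.ofReal (((t / 2) ^ d)⁻¹) *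
          ENNReal.ofReal (t ^ (p * d - 1)) := by gcongr
    _ = ENNReal.ofReal ((t / 4) ^ (-m) * ((t / 2) ^ d)⁻¹ * t ^ (p * d - 1)) * N ^ (d - 1) * J := by
        rw [ENNReal.ofReal_mul (by positivity), ENNReal.ofReal_mul (by positivity)]
        ring
    _ = _ := by
        rw [h_real, ENNReal.ofReal_mul (by positivity)]
        ring

theorem exists_eLpNorm_R2op_le_of_lt {d : ℕ} {p q : ℝ} (hp : 1 ≤ p) (hq : 0 < q) (hqd : q < p * d) :
    ∃ C : ℝ≥0∞, C ≠ ⊤ ∧ ∀ f0 : ℝ → ℝ, Measurable f0 →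
      eLpNorm (R2op f0) (ENNReal.ofReal q) (muWeight d) ≤
        C * eLpNorm f0 (ENNReal.ofReal p) (muWeight d) := by
  have hd : d ≠ 0 := by rintro rfl; simp at hqd; linarith
  set g : ℝ → ℝ := (Ioo 0 2).indicator fun r => r ^ (-p⁻¹)
  set c := ENNReal.ofReal (((1 / 4 : ℝ) ^ (d - 1))⁻¹) ^ (1 / ENNReal.ofReal p).toReal
  have hg : eLpNorm g (ENNReal.ofReal q) (muWeight d) ≠ ⊤ :=
    eLpNorm_indicator_rpow_muWeight_ne_top hd hq zero_le_two (by
      rwa [inv_mul_lt_iff₀ (by linarith)])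
  refine ⟨2 * c * eLpNorm g (ENNReal.ofReal q) (muWeight d), by finiteness, fun f0 hf => ?_⟩
  set A := eLpNorm f0 (ENNReal.ofReal p) (volume.restrict (Ioc (1 / 4) 4))
  have h_pt : ∀ᵐ r ∂muWeight d, ‖R2op f0 r‖ₑ ≤ 2 * A * ‖g r‖ₑ := by
    filter_upwards [ae_muWeight_pos d] with r hr
    rw [Real.enorm_of_nonneg (R2op_nonneg f0 hr)]
    rcases lt_or_ge r 2 with hr2 | hr2
    · rw [show g r = r ^ (-p⁻¹) from indicator_of_mem (show r ∈ Ioo 0 2 from ⟨hr, hr2⟩) _,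
        Real.enorm_of_nonneg (by positivity), mul_right_comm]
      exact ofReal_R2op_le_rpow hf hp hr
    · simp [R2op_eq_zero_of_lt f0 (show 4 / 3 < r by linarith)]
  calc eLpNorm (R2op f0) (ENNReal.ofReal q) (muWeight d)
      ≤ 2 * A * eLpNorm g (ENNReal.ofReal q) (muWeight d) :=
        eLpNorm_le_mul_eLpNorm_of_ae_le_mul'' _
          ((Measurable.indicator (by fun_prop) measurableSet_Ioo).aestronglyMeasurable) h_pt
    _ ≤ 2 * (c * eLpNorm f0 (ENNReal.ofReal p) (muWeight d)) *
          eLpNorm g (ENNReal.ofReal q) (muWeight d) := by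
        gcongr
        exact eLpNorm_restrict_le_eLpNorm_muWeight d (by norm_num) Ioc_subset_Ioi_self f0
          ENNReal.ofReal_ne_top
    _ = _ := by ring

theorem lintegral_enorm_R2op_rpow_le {d : ℕ} (hd : d ≠ 0) {p : ℝ} (hp : 1 < p) {f0 : ℝ → ℝ}
    (hf : Measurable f0) :
    ∫⁻ r, ‖R2op f0 r‖ₑ ^ (p * d) ∂muWeight d ≤
      ENNReal.ofReal (p * d) * ENNReal.ofReal (2 ^ d * 4 ^ ((p - 1) * (d - 1))) *
        ENNReal.ofReal (4 ^ (p - 1) / (p - 1)) * (∫⁻ s in Ioc (1 / 4) 4, ‖f0 s‖ₑ ^ p) ^ d := by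
  set ν := volume.restrict (Ioc (1 / 4 : ℝ) 4)
  set N := ∫⁻ s, ‖f0 s‖ₑ ^ p ∂ν
  set C := ENNReal.ofReal (2 ^ d * 4 ^ ((p - 1) * (d - 1)))
  rcases eq_or_ne N ⊤ with hN | hN
  · have hp' : 0 < p - 1 := sub_pos.2 hp
    rw [hN, ENNReal.top_pow hd, ENNReal.mul_top (by simp only [C]; positivity)]
    exact le_top
  calc ∫⁻ r, ‖R2op f0 r‖ₑ ^ (p * d) ∂muWeight d
      ≤ ENNReal.ofReal (p * d) * ∫⁻ t in Ioi 0,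
          muWeight d {r | t < ‖R2op f0 r‖} * ENNReal.ofReal (t ^ (p * d - 1)) :=
        lintegral_enorm_rpow_le_lintegral_meas_lt_mul _ (by positivity)
    _ ≤ ENNReal.ofReal (p * d) * ∫⁻ t in Ioi 0,
          C * N ^ (d - 1) * (ENNReal.ofReal (t ^ (p - 2)) * tailIntegral ν f0 (t / 4)) := by
        gcongr _ * ?_
        refine setLIntegral_mono' measurableSet_Ioi fun t ht => ?_
        exact (mul_le_mul_left (muWeight_lt_norm_R2op_le hd f0 ht) _).trans
          (div_pow_mul_rpow_le hd ht (rpow_mul_tailIntegral_le f0 _ hp.le))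
    _ = ENNReal.ofReal (p * d) *
          (C * N ^ (d - 1) * (ENNReal.ofReal (4 ^ (p - 1) / (p - 1)) * N)) := by
        rw [lintegral_const_mul' _ _ (by finiteness),
          lintegral_rpow_mul_tailIntegral hf hp four_pos]
    _ = _ := by
        rw [← pow_sub_one_mul hd N]
        ring

theorem exists_eLpNorm_R2op_le_endpoint {d : ℕ} (hd : d ≠ 0) {p : ℝ} (hp : 1 < p) :
    ∃ C : ℝ≥0∞, C ≠ ⊤ ∧ ∀ f0 : ℝ → ℝ, Measurable f0 →
      eLpNorm (R2op f0) (ENNReal.ofReal (p * d)) (muWeight d) ≤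
        C * eLpNorm f0 (ENNReal.ofReal p) (muWeight d) := by
  have hQ : 0 < p * d := by positivity
  set K := ENNReal.ofReal (p * d) * ENNReal.ofReal (2 ^ d * 4 ^ ((p - 1) * (d - 1))) *
    ENNReal.ofReal (4 ^ (p - 1) / (p - 1))
  set c := ENNReal.ofReal (((1 / 4 : ℝ) ^ (d - 1))⁻¹) ^ (1 / ENNReal.ofReal p).toReal
  refine ⟨K ^ (p * d)⁻¹ * c, by finiteness, fun f0 hf => ?_⟩
  calc eLpNorm (R2op f0) (ENNReal.ofReal (p * d)) (muWeight d)
      = (∫⁻ r, ‖R2op f0 r‖ₑ ^ (p * d) ∂muWeight d) ^ (p * d)⁻¹ := by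
        rw [eLpNorm_eq_lintegral_rpow_enorm_toReal (by simpa using hQ) ENNReal.ofReal_ne_top,
          ENNReal.toReal_ofReal hQ.le, one_div]
    _ ≤ (K * (∫⁻ s in Ioc (1 / 4) 4, ‖f0 s‖ₑ ^ p) ^ d) ^ (p * d)⁻¹ := by
        gcongr
        exact lintegral_enorm_R2op_rpow_le hd hp hf
    _ = K ^ (p * d)⁻¹ * eLpNorm f0 (ENNReal.ofReal p) (volume.restrict (Ioc (1 / 4) 4)) := by
        rw [ENNReal.mul_rpow_of_nonneg _ _ (by positivity), eLpNorm_eq_lintegral_rpow_enorm_toReal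
          (by simpa using hp.trans' one_pos) ENNReal.ofReal_ne_top,
          ENNReal.toReal_ofReal (by linarith),
          ← ENNReal.rpow_natCast, ← ENNReal.rpow_mul]
        congr 2
        field_simp
    _ ≤ K ^ (p * d)⁻¹ * c * eLpNorm f0 (ENNReal.ofReal p) (muWeight d) := by
        rw [mul_assoc]
        gcongr
        exact eLpNorm_restrict_le_eLpNorm_muWeight d (by norm_num) Ioc_subset_Ioi_self f0
          ENNReal.ofReal_ne_top

theorem R2_bound_general (d : ℕ) (p q : ℝ)
    (hpq : (1 < p ∧ p ≤ q ∧ q ≤ p * d) ∨ (p = 1 ∧ 1 ≤ q ∧ q < d)) :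
    ∃ C : ℝ≥0∞, C ≠ ⊤ ∧ ∀ f0 : ℝ → ℝ, Measurable f0 →
      eLpNorm (R2op f0) (ENNReal.ofReal q) (muWeight d) ≤
        C * eLpNorm f0 (ENNReal.ofReal p) (muWeight d) := by
  rcases hpq with ⟨hp, hpq, hqd⟩ | ⟨rfl, hq, hqd⟩
  · rcases hqd.lt_or_eq with hqd | rfl
    · exact exists_eLpNorm_R2op_le_of_lt hp.le (by linarith) hqd
    · have hd : d ≠ 0 := by rintro rfl; simp at hpq; linarith
      exact exists_eLpNorm_R2op_le_endpoint hd hp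
  · exact exists_eLpNorm_R2op_le_of_lt le_rfl (by linarith) (by rwa [one_mul])

theorem R2_bound (d : ℕ) (hd : 3 ≤ d) (p q : ℝ)
    (hpq : (1 < p ∧ p ≤ q ∧ q ≤ p * d) ∨ (p = 1 ∧ 1 ≤ q ∧ q < d)) :
    ∃ C : ℝ≥0∞, C ≠ ⊤ ∧ ∀ f0 : ℝ → ℝ, Measurable f0 →
      eLpNorm (R2op f0) (ENNReal.ofReal q) (muWeight d) ≤
        C * eLpNorm f0 (ENNReal.ofReal p) (muWeight d) :=
  R2_bound_general d p q hpq
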